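/- φ̃(n) = 3 if and only if n ∈ {7, 9, 16, 36, 48, 90}. -/

import Mathlib

/-- φ̃(n): number of m with 1 ≤ m ≤ n, gcd(m,n)=1, m not prime. -/
def phiT (n : ℕ) : ℕ :=
  ((Finset.Icc 1 n).filter (fun m => Nat.gcd m n = 1 ∧ ¬ m.Prime)).card

/-- The product of the first k primes. -/
noncomputable def primorialN (k : ℕ) : ℕ := ∏ i ∈ Finset.range k, Nat.nth Nat.Prime i

/-!
If `p < q` are primes not dividing `n` with `q² ≤ n`, then `1, p², pq, q²` are four non-primes in
`[1, n]` coprime to `n`, so `φ̃(n) ≥ 4`. For `n ≥ 169` let `p < q` be the two smallest primes not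
dividing `n`. If `q² > n`, then `q > 13`, and `n` is divisible by every prime below `q` other
than `p`, so it is at least the product of the primes below `q` without the largest one; by
Bertrand's postulate that product is at least `q²`. The cases `n < 169` are a finite computation.
-/

open Nat (nth)

lemma nth_prime_five_eq_thirteen : nth Nat.Prime 5 = 13 := by
  have h := Nat.nth_count (p := Nat.Prime) (n := 13) (by norm_num)
  rwa [show Nat.count Nat.Prime 13 = 5 by decide] at h

lemma nth_prime_succ_le_two_mul (k : ℕ) : nth Nat.Prime (k + 1) ≤ 2 * nth Nat.Prime k := by
  obtain ⟨r, hr, hlt, hle⟩ :=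
    Nat.exists_prime_lt_and_le_two_mul (nth Nat.Prime k) (Nat.prime_nth_prime k).ne_zero
  have hk : k < Nat.count Nat.Prime r := (Nat.lt_nth_iff_count_lt Nat.infinite_setOfPred_prime).2 hlt
  calc nth Nat.Prime (k + 1) ≤ nth Nat.Prime (Nat.count Nat.Prime r) :=
        (Nat.nth_le_nth Nat.infinite_setOfPred_prime).2 hk
    _ = r := Nat.nth_count hr
    _ ≤ 2 * nth Nat.Prime k := hle

lemma primorialN_succ (k : ℕ) : primorialN (k + 1) = primorialN k * nth Nat.Prime k :=
  Finset.prod_range_succ _ _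

lemma primorialN_four : primorialN 4 = 210 := by
  simp [primorialN, Finset.prod_range_succ, Nat.nth_prime_zero_eq_two, Nat.nth_prime_one_eq_three,
    Nat.nth_prime_two_eq_five, Nat.nth_prime_three_eq_seven]

lemma sq_nth_prime_succ_le_primorialN {k : ℕ} (hk : 4 ≤ k) :
    nth Nat.Prime (k + 1) ^ 2 ≤ primorialN k := by
  induction k, hk using Nat.le_induction with
  | base => rw [primorialN_four, nth_prime_five_eq_thirteen]; norm_num
  | succ k hk ih =>
    have h4 : 4 ≤ nth Nat.Prime k := by have := Nat.add_two_le_nth_prime k; omega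
    calc nth Nat.Prime (k + 2) ^ 2
        ≤ (2 * nth Nat.Prime (k + 1)) ^ 2 := Nat.pow_le_pow_left (nth_prime_succ_le_two_mul _) 2
      _ = 4 * nth Nat.Prime (k + 1) ^ 2 := by ring
      _ ≤ nth Nat.Prime k * primorialN k := Nat.mul_le_mul h4 ih
      _ = primorialN (k + 1) := by rw [primorialN_succ, Nat.mul_comm]

lemma primorialN_le_prod_erase {k i : ℕ} (hi : i ≤ k) :
    primorialN k ≤ ∏ j ∈ (Finset.range (k + 1)).erase i, nth Nat.Prime j := by
  have hprod : (∏ j ∈ (Finset.range (k + 1)).erase i, nth Nat.Prime j) * nth Nat.Prime i =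
      primorialN k * nth Nat.Prime k :=
    (Finset.prod_erase_mul _ _ (Finset.mem_range.2 (Nat.lt_succ_of_le hi))).trans
      (primorialN_succ k)
  have hle : nth Nat.Prime i ≤ nth Nat.Prime k := (Nat.nth_le_nth Nat.infinite_setOfPred_prime).2 hi
  refine Nat.le_of_mul_le_mul_right ?_ (Nat.prime_nth_prime k).pos
  calc primorialN k * nth Nat.Prime k
      = (∏ j ∈ (Finset.range (k + 1)).erase i, nth Nat.Prime j) * nth Nat.Prime i := hprod.symm
    _ ≤ (∏ j ∈ (Finset.range (k + 1)).erase i, nth Nat.Prime j) * nth Nat.Prime k :=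
        Nat.mul_le_mul_left _ hle

lemma prod_nth_prime_dvd {s : Finset ℕ} {n : ℕ} (h : ∀ i ∈ s, nth Nat.Prime i ∣ n) :
    ∏ i ∈ s, nth Nat.Prime i ∣ n := by
  have hdvd : ∏ p ∈ s.image (nth Nat.Prime), p ∣ n := by
    refine Finset.prod_primes_dvd n ?_ ?_ <;> simp only [Finset.mem_image] <;>
      rintro _ ⟨i, hi, rfl⟩
    exacts [(Nat.prime_nth_prime i).prime, h i hi]
  have hinj := Nat.nth_injective Nat.infinite_setOfPred_prime
  rwa [Finset.prod_image fun a _ b _ hab => hinj hab] at hdvd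

lemma nth_prime_not_dvd_of_le {n i : ℕ} (hn : n ≠ 0) (hi : n ≤ i) : ¬ nth Nat.Prime i ∣ n :=
  fun hd => by
    have := Nat.le_of_dvd (Nat.pos_of_ne_zero hn) hd
    have := Nat.add_two_le_nth_prime i
    omega

lemma exists_two_least_nth_prime_not_dvd {n : ℕ} (hn : n ≠ 0) :
    ∃ i j, i < j ∧ ¬ nth Nat.Prime i ∣ n ∧ ¬ nth Nat.Prime j ∣ n ∧
      ∀ l < j, l ≠ i → nth Nat.Prime l ∣ n := by
  classical
  have hA : ∃ i, ¬ nth Nat.Prime i ∣ n := ⟨n, nth_prime_not_dvd_of_le hn le_rfl⟩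
  obtain ⟨i, hi, hi_min⟩ : ∃ i, ¬ nth Nat.Prime i ∣ n ∧ ∀ l < i, nth Nat.Prime l ∣ n :=
    ⟨_, Nat.find_spec hA, fun l hl => not_not.1 (Nat.find_min hA hl)⟩
  have hB : ∃ j, i < j ∧ ¬ nth Nat.Prime j ∣ n :=
    ⟨n + i + 1, by omega, nth_prime_not_dvd_of_le hn (by omega)⟩
  obtain ⟨hij, hj⟩ := Nat.find_spec hB
  refine ⟨i, _, hij, hi, hj, fun l hl hli => ?_⟩
  rcases Nat.lt_or_gt_of_ne hli with h | h
  · exact hi_min l h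
  · exact not_not.1 fun hnd => Nat.find_min hB hl ⟨h, hnd⟩

lemma exists_primes_not_dvd_sq_le {n : ℕ} (hn : 169 ≤ n) :
    ∃ p q : ℕ, p.Prime ∧ q.Prime ∧ p < q ∧ ¬ p ∣ n ∧ ¬ q ∣ n ∧ q ^ 2 ≤ n := by
  obtain ⟨i, j, hij, hi, hj, hdvd⟩ := exists_two_least_nth_prime_not_dvd (n := n) (by omega)
  have hmono {a b : ℕ} : nth Nat.Prime a < nth Nat.Prime b ↔ a < b :=
    Nat.nth_lt_nth Nat.infinite_setOfPred_prime
  refine ⟨_, _, Nat.prime_nth_prime i, Nat.prime_nth_prime j, hmono.2 hij, hi, hj, ?_⟩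
  by_contra! hlt
  have hj5 : 5 < j := hmono.1 <| by
    rw [nth_prime_five_eq_thirteen]; nlinarith
  obtain ⟨k, rfl⟩ : ∃ k, j = k + 1 := ⟨j - 1, by omega⟩
  have hprod : ∏ l ∈ (Finset.range (k + 1)).erase i, nth Nat.Prime l ∣ n :=
    prod_nth_prime_dvd fun l hl =>
      hdvd l (Finset.mem_range.1 (Finset.mem_of_mem_erase hl)) (Finset.ne_of_mem_erase hl)
  have := calc
    nth Nat.Prime (k + 1) ^ 2 ≤ primorialN k := sq_nth_prime_succ_le_primorialN (by omega)
    _ ≤ _ := primorialN_le_prod_erase (by omega)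
    _ ≤ n := Nat.le_of_dvd (by omega) hprod
  omega

lemma four_le_phiT {n p q : ℕ} (hp : p.Prime) (hq : q.Prime) (hpq : p < q)
    (hpn : ¬ p ∣ n) (hqn : ¬ q ∣ n) (hqsq : q ^ 2 ≤ n) : 4 ≤ phiT n := by
  have hcp : Nat.Coprime p n := hp.coprime_iff_not_dvd.2 hpn
  have hcq : Nat.Coprime q n := hq.coprime_iff_not_dvd.2 hqn
  have h2p := hp.two_le
  have h1 : 1 < p ^ 2 := by nlinarith
  have h2 : p ^ 2 < p * q := by nlinarith
  have h3 : p * q < q ^ 2 := by nlinarith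
  have hsub : {1, p ^ 2, p * q, q ^ 2} ⊆
      (Finset.Icc 1 n).filter (fun m => Nat.gcd m n = 1 ∧ ¬ m.Prime) := by
    intro m hm
    simp only [Finset.mem_insert, Finset.mem_singleton] at hm
    rw [Finset.mem_filter, Finset.mem_Icc]
    rcases hm with rfl | rfl | rfl | rfl
    · exact ⟨⟨le_rfl, by omega⟩, Nat.gcd_one_left n, Nat.not_prime_one⟩
    · exact ⟨⟨by omega, by omega⟩, hcp.pow_left 2, Nat.Prime.not_prime_pow le_rfl⟩
    · exact ⟨⟨by omega, by omega⟩, hcp.mul_left hcq, Nat.not_prime_mul hp.ne_one hq.ne_one⟩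
    · exact ⟨⟨by omega, hqsq⟩, hcq.pow_left 2, Nat.Prime.not_prime_pow le_rfl⟩
  have hcard : ({1, p ^ 2, p * q, q ^ 2} : Finset ℕ).card = 4 := by
    rw [Finset.card_insert_of_notMem (by simp; omega), Finset.card_insert_of_notMem (by simp; omega),
      Finset.card_insert_of_notMem (by simp; omega), Finset.card_singleton]
  exact hcard ▸ Finset.card_le_card hsub

set_option maxRecDepth 40000 in
lemma phiT_eq_three_iff_of_lt {n : ℕ} (hn : n < 169) :
    phiT n = 3 ↔ n ∈ ({7, 9, 16, 36, 48, 90} : Finset ℕ) := by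
  interval_cases n <;> decide

theorem stmt16_general (n : ℕ) :
    phiT n = 3 ↔ n ∈ ({7, 9, 16, 36, 48, 90} : Finset ℕ) := by
  rcases lt_or_ge n 169 with hn | hn
  · exact phiT_eq_three_iff_of_lt hn
  obtain ⟨p, q, hp, hq, hpq, hpn, hqn, hqsq⟩ := exists_primes_not_dvd_sq_le hn
  have h4 := four_le_phiT hp hq hpq hpn hqn hqsq
  simp only [Finset.mem_insert, Finset.mem_singleton]
  omega

theorem stmt16 (n : ℕ) (hn : 0 < n) :
    phiT n = 3 ↔ n ∈ ({7, 9, 16, 36, 48, 90} : Finset ℕ) :=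
  stmt16_general n
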